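/- Let F be a μ-forest for a nonempty word w, let i₁,…,i_k be leaves of F, and form the directed graph on vertex set {1,…,k} with an edge from p to q whenever leaf i_p points to leaf i_q. Call a strongly connected component minimal if no edge enters it from a vertex outside it, and let ℳ be the set of minimal strongly connected components. Then for any two distinct S₁, S₂ ∈ ℳ, the infixes block(S₁) and block(S₂) of w are non-overlapping: no leaf of F descends both from a node of the extended anchor set of S₁ and from a node of the extended anchor set of S₂. -/
import Mathlib


inductive Forest (A : Type) : Type
  | leaf : A → Forest A
  | node : List (Forest A) → Forest A

namespace Forest

mutual
  /-- The word spelled out by the leaves of a forest, from left to right. -/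
  def word {A : Type} : Forest A → List A
    | .leaf a => [a]
    | .node l => wordList l
  def wordList {A : Type} : List (Forest A) → List A
    | [] => []
    | t :: l => t.word ++ wordList l
end

mutual
  /-- The paths (sequences of child indices, from the root) of the leaves of a forest,
  in left-to-right order; the `i`-th entry is the path of the leaf carrying position `i`
  of `F.word`. -/
  def leafPaths {A : Type} : Forest A → List (List ℕ)
    | .leaf _ => [[]]
    | .node l => leafPathsList 0 l
  def leafPathsList {A : Type} : ℕ → List (Forest A) → List (List ℕ)
    | _, [] => []
    | n, t :: l => (t.leafPaths.map (n :: ·)) ++ leafPathsList (n + 1) l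
end

def children {A : Type} : Forest A → List (Forest A)
  | .leaf _ => []
  | .node l => l

/-- The subtree of a forest at a given path, if it exists. -/
def subtreeAt? {A : Type} : Forest A → List ℕ → Option (Forest A)
  | F, [] => some F
  | F, n :: p =>
    match F.children[n]? with
    | some t => t.subtreeAt? p
    | none => none

end Forest

/-- `IsForest μ c F` says `F` is a `μ`-forest (`c` standing for the cardinality `|M|`). -/
inductive IsForest {A M : Type} [Monoid M] (μ : List A → M) (c : ℕ) : Forest A → Prop
  | leaf (a : A) : IsForest μ c (.leaf a)
  | node (l : List (Forest A)) (h2 : 2 ≤ l.length)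
      (hrec : ∀ t ∈ l, IsForest μ c t)
      (h3 : 3 ≤ l.length →
        ∃ m : M, (∀ t ∈ l, μ t.word = m) ∧ m ^ c = m ^ (c + 1)) :
      IsForest μ c (.node l)

/-- `q` is a sibling of `p` at distance `d` in the left-to-right order of siblings
(every node is its own sibling at distance 0). -/
def SiblingAtDist (p q : List ℕ) (d : ℕ) : Prop :=
  (p = q ∧ d = 0) ∨
    ∃ (r : List ℕ) (a b : ℕ), p = r ++ [a] ∧ q = r ++ [b] ∧ (a - b) + (b - a) = d

/-- Node `p` observes node `q` when `q` is a sibling at distance at most `c` of an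
ancestor of `p` (a node being its own ancestor). -/
def Observes (c : ℕ) (p q : List ℕ) : Prop :=
  ∃ r : List ℕ, r <+: p ∧ ∃ d ≤ c, SiblingAtDist r q d

/-- A node is iterable when it has at least `c` left siblings and at least `c` right
siblings (not counting itself). -/
def Iterable {A : Type} (F : Forest A) (c : ℕ) (p : List ℕ) : Prop :=
  ∃ (r : List ℕ) (a : ℕ), p = r ++ [a] ∧ c ≤ a ∧
    ∃ t, F.subtreeAt? r = some t ∧ a + c + 1 ≤ t.children.length

/-- `anc` is the anchor of the leaf with path `lf`: its lowest iterable ancestor if one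
exists, and otherwise the root. -/
def IsAnchor {A : Type} (F : Forest A) (c : ℕ) (lf anc : List ℕ) : Prop :=
  (anc <+: lf ∧ Iterable F c anc ∧
    ∀ q, q <+: lf → Iterable F c q → q.length ≤ anc.length)
  ∨ ((∀ q, q <+: lf → ¬ Iterable F c q) ∧ anc = [])

/-- The leaf carrying position `i` points to the leaf carrying position `j`:
the anchor of the former observes the anchor of the latter. -/
def PointsTo {A : Type} (F : Forest A) (c : ℕ) (i j : ℕ) : Prop :=
  ∃ pi pj ai aj, F.leafPaths[i]? = some pi ∧ F.leafPaths[j]? = some pj ∧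
    IsAnchor F c pi ai ∧ IsAnchor F c pj aj ∧ Observes c ai aj

/-- `S` is a strongly connected component of the directed graph `E` that is minimal,
i.e. no edge enters it from a vertex outside it. -/
def IsMinSCC {k : ℕ} (E : Fin k → Fin k → Prop) (S : Set (Fin k)) : Prop :=
  (∃ p₀ ∈ S,
    S = {q | Relation.ReflTransGen E p₀ q ∧ Relation.ReflTransGen E q p₀}) ∧
  ∀ p, p ∉ S → ∀ q ∈ S, ¬ E p q

/-- The set of anchors of the leaves `i p` for `p ∈ S`. -/
def anchorsOf {A : Type} (F : Forest A) (c : ℕ) {k : ℕ} (i : Fin k → ℕ)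
    (S : Set (Fin k)) : Set (List ℕ) :=
  {a | ∃ p ∈ S, ∃ pl, F.leafPaths[i p]? = some pl ∧ IsAnchor F c pl a}

/-- The extended anchor set of `S`: the anchors of the leaves `i p` for `p ∈ S`,
together with all siblings lying between them in the left-to-right order. -/
def extAnchorsOf {A : Type} (F : Forest A) (c : ℕ) {k : ℕ} (i : Fin k → ℕ)
    (S : Set (Fin k)) : Set (List ℕ) :=
  anchorsOf F c i S ∪
    {b | ∃ a₁ ∈ anchorsOf F c i S, ∃ a₂ ∈ anchorsOf F c i S,
      ∃ (r : List ℕ) (n₁ n₂ n : ℕ), a₁ = r ++ [n₁] ∧ a₂ = r ++ [n₂] ∧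
        b = r ++ [n] ∧ n₁ ≤ n ∧ n ≤ n₂}

section Aux

variable {A : Type} {F : Forest A} {c : ℕ}

lemma sibling_length {p q : List ℕ} {d : ℕ} (h : SiblingAtDist p q d) :
    p.length = q.length := by
  rcases h with ⟨rfl, _⟩ | ⟨r, a, b, rfl, rfl, _⟩ <;> simp

lemma isAnchor_unique {lf a₁ a₂ : List ℕ} (h₁ : IsAnchor F c lf a₁)
    (h₂ : IsAnchor F c lf a₂) : a₁ = a₂ := by
  rcases h₁ with ⟨hp₁, hi₁, hm₁⟩ | ⟨hn₁, rfl⟩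
  · rcases h₂ with ⟨hp₂, hi₂, hm₂⟩ | ⟨hn₂, rfl⟩
    · have l₁ : a₂.length ≤ a₁.length := hm₁ _ hp₂ hi₂
      have l₂ : a₁.length ≤ a₂.length := hm₂ _ hp₁ hi₁
      exact (List.prefix_of_prefix_length_le hp₁ hp₂ l₂).eq_of_length
        (le_antisymm l₂ l₁)
    · exact absurd hi₁ (hn₂ _ hp₁)
  · rcases h₂ with ⟨hp₂, hi₂, _⟩ | ⟨_, rfl⟩
    · exact absurd hi₂ (hn₁ _ hp₂)
    · rfl

lemma observes_length {a b : List ℕ} (h : Observes c a b) : b.length ≤ a.length := by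
  obtain ⟨r, hr, d, _, hs⟩ := h
  calc b.length = r.length := (sibling_length hs).symm
    _ ≤ a.length := hr.length_le

lemma observes_sibling {a b : List ℕ} (h : Observes c a b)
    (hlen : a.length = b.length) : ∃ d ≤ c, SiblingAtDist a b d := by
  obtain ⟨r, hr, d, hd, hs⟩ := h
  have : r = a := hr.eq_of_length (by rw [sibling_length hs, hlen])
  exact ⟨d, hd, this ▸ hs⟩

/-- `a` is the (unique) anchor of the `j`-th leaf of `F`. -/
def Anch {A : Type} (F : Forest A) (c : ℕ) (j : ℕ) (a : List ℕ) : Prop :=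
  ∃ pl, F.leafPaths[j]? = some pl ∧ IsAnchor F c pl a

lemma anch_unique {j : ℕ} {a₁ a₂ : List ℕ} (h₁ : Anch F c j a₁)
    (h₂ : Anch F c j a₂) : a₁ = a₂ := by
  obtain ⟨pl, hl, ha⟩ := h₁
  obtain ⟨pl', hl', ha'⟩ := h₂
  rw [hl] at hl'
  cases hl'
  exact isAnchor_unique ha ha'

variable {k : ℕ} {i : Fin k → ℕ} {E : Fin k → Fin k → Prop}

lemma edge_anch (hE : ∀ p q, E p q ↔ PointsTo F c (i p) (i q)) {p q : Fin k}
    (h : E p q) :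
    ∃ ap aq, Anch F c (i p) ap ∧ Anch F c (i q) aq ∧ Observes c ap aq := by
  obtain ⟨pi, pj, ai, aj, h1, h2, h3, h4, h5⟩ := (hE p q).1 h
  exact ⟨ai, aj, ⟨pi, h1, h3⟩, ⟨pj, h2, h4⟩, h5⟩

lemma reach_anchor_len (hE : ∀ p q, E p q ↔ PointsTo F c (i p) (i q))
    {x y : Fin k} (h : Relation.ReflTransGen E x y) {ay : List ℕ}
    (hay : Anch F c (i y) ay) :
    ∀ ax, Anch F c (i x) ax → ay.length ≤ ax.length := by
  induction h using Relation.ReflTransGen.head_induction_on with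
  | refl => intro ax hax; rw [anch_unique hay hax]
  | head hxz hzy ih =>
    intro ax hax
    obtain ⟨ax', az, hax', haz, hobs⟩ := edge_anch hE hxz
    rw [anch_unique hax hax']
    exact le_trans (ih _ haz) (observes_length hobs)

lemma sameLen (hE : ∀ p q, E p q ↔ PointsTo F c (i p) (i q))
    {S : Set (Fin k)} {p₀ : Fin k}
    (hSdef : S = {q | Relation.ReflTransGen E p₀ q ∧ Relation.ReflTransGen E q p₀})
    {x z : Fin k} (hx : x ∈ S) (hz : z ∈ S) {ax az : List ℕ}
    (hax : Anch F c (i x) ax) (haz : Anch F c (i z) az) :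
    ax.length = az.length := by
  rw [hSdef] at hx hz
  obtain ⟨hx1, hx2⟩ := hx
  obtain ⟨hz1, hz2⟩ := hz
  exact le_antisymm (reach_anchor_len hE (hz2.trans hx1) hax _ haz)
    (reach_anchor_len hE (hx2.trans hz1) haz _ hax)

/-- The step relation between positions of anchors of `S`-vertices under parent `r`. -/
def StepRel {A : Type} (F : Forest A) (c : ℕ) {k : ℕ} (i : Fin k → ℕ)
    (S : Set (Fin k)) (r : List ℕ) (u v : ℕ) : Prop :=
  (∃ x ∈ S, Anch F c (i x) (r ++ [u])) ∧ (∃ x ∈ S, Anch F c (i x) (r ++ [v])) ∧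
    (u - v) + (v - u) ≤ c

lemma chainT (hE : ∀ p q, E p q ↔ PointsTo F c (i p) (i q))
    {S : Set (Fin k)} {p₀ : Fin k}
    (hSdef : S = {q | Relation.ReflTransGen E p₀ q ∧ Relation.ReflTransGen E q p₀})
    {r : List ℕ} {y : Fin k} (hyS : y ∈ S) {v : ℕ}
    (hay : Anch F c (i y) (r ++ [v])) :
    ∀ {x : Fin k}, Relation.ReflTransGen E x y → x ∈ S →
      ∀ u, Anch F c (i x) (r ++ [u]) →
        Relation.ReflTransGen (StepRel F c i S r) u v := by
  intro x h
  induction h using Relation.ReflTransGen.head_induction_on with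
  | refl =>
    intro _ u hau
    have := anch_unique hau hay
    have : u = v := by
      have := (List.append_inj' this rfl).2
      simpa using this
    exact this ▸ Relation.ReflTransGen.refl
  | @head x z hxz hzy ih =>
    intro hxS u hau
    have hzS : z ∈ S := by
      rw [hSdef] at hxS hyS ⊢
      exact ⟨hxS.1.tail hxz, hzy.trans hyS.2⟩
    obtain ⟨ax', az, hax', haz, hobs⟩ := edge_anch hE hxz
    have hax : ax' = r ++ [u] := anch_unique hax' hau
    subst hax
    have hlen : (r ++ [u]).length = az.length := sameLen hE hSdef hxS hzS hax' haz
    obtain ⟨d, hd, hsib⟩ := observes_sibling hobs hlen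
    rcases hsib with ⟨heq, _⟩ | ⟨s, a', b', h1, h2, h3⟩
    · exact ih hzS u (heq ▸ haz)
    · obtain ⟨rfl, h⟩ := List.append_inj' h1 rfl
      have ha' : a' = u := by simpa using h.symm
      subst ha'
      subst h2
      refine Relation.ReflTransGen.head ⟨⟨x, hxS, hax'⟩, ⟨z, hzS, haz⟩, ?_⟩ (ih hzS b' haz)
      omega

lemma straddle {c : ℕ} {P : ℕ → Prop} {step : ℕ → ℕ → Prop}
    (hstep : ∀ u v, step u v → P u ∧ P v ∧ (u - v) + (v - u) ≤ c) :
    ∀ {x y : ℕ}, Relation.ReflTransGen step x y → P x → ∀ n, x ≤ n → n ≤ y →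
      ∃ z z', P z ∧ P z' ∧ z ≤ n ∧ n ≤ z' ∧ z' ≤ z + c := by
  intro x y h
  induction h using Relation.ReflTransGen.head_induction_on with
  | refl => intro hx n h1 h2; exact ⟨_, _, hx, hx, h1, h2, by omega⟩
  | @head a b hab hby ih =>
    intro ha n h1 h2
    obtain ⟨hPa, hPb, hd⟩ := hstep _ _ hab
    by_cases hn : n ≤ b
    · exact ⟨a, b, hPa, hPb, h1, hn, by omega⟩
    · exact ih hPb n (by omega) h2

lemma scc_eq {S₁ S₂ : Set (Fin k)} (h₁ : IsMinSCC E S₁) (h₂ : IsMinSCC E S₂)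
    {q : Fin k} (hq₁ : q ∈ S₁) (hq₂ : q ∈ S₂) : S₁ = S₂ := by
  obtain ⟨p₁, hp₁, he₁⟩ := h₁.1
  obtain ⟨p₂, hp₂, he₂⟩ := h₂.1
  subst he₁; subst he₂
  obtain ⟨h1a, h1b⟩ := hq₁
  obtain ⟨h2a, h2b⟩ := hq₂
  ext x
  simp only [Set.mem_setOf_eq]
  constructor
  · rintro ⟨hx1, hx2⟩
    exact ⟨(h2a.trans h1b).trans hx1, hx2.trans (h1a.trans h2b)⟩
  · rintro ⟨hx1, hx2⟩
    exact ⟨(h1a.trans h2b).trans hx1, hx2.trans (h2a.trans h1b)⟩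

lemma final_eq (hE : ∀ p q, E p q ↔ PointsTo F c (i p) (i q))
    {S₁ S₂ : Set (Fin k)} (hS₁ : IsMinSCC E S₁) (hS₂ : IsMinSCC E S₂)
    {q p : Fin k} {aq ap : List ℕ} (hq : q ∈ S₂) (hp : p ∈ S₁)
    (haq : Anch F c (i q) aq) (hap : Anch F c (i p) ap)
    (hobs : Observes c aq ap) : S₁ = S₂ := by
  obtain ⟨plq, hq1, hq2⟩ := haq
  obtain ⟨plp, hp1, hp2⟩ := hap
  have hEqp : E q p := (hE q p).2 ⟨plq, plp, aq, ap, hq1, hp1, hq2, hp2, hobs⟩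
  by_cases hqS : q ∈ S₁
  · exact scc_eq hS₁ hS₂ hqS hq
  · exact absurd hEqp (hS₁.2 q hqS p hp)

lemma straddle_anchor (hE : ∀ p q, E p q ↔ PointsTo F c (i p) (i q))
    {S : Set (Fin k)} (hS : IsMinSCC E S) {b : List ℕ}
    (hb : b ∈ extAnchorsOf F c i S) :
    (∃ p ∈ S, Anch F c (i p) b) ∨
      ∃ r n z z', b = r ++ [n] ∧ z ≤ n ∧ n ≤ z' ∧ z' ≤ z + c ∧
        (∃ p ∈ S, Anch F c (i p) (r ++ [z])) ∧
        (∃ p ∈ S, Anch F c (i p) (r ++ [z'])) := by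
  rcases hb with ⟨p, hp, pl, h1, h2⟩ |
    ⟨a₁, ⟨p₁, hp₁, pl₁, hl₁, ha₁⟩, a₂, ⟨p₂, hp₂, pl₂, hl₂, ha₂⟩,
      r, n₁, n₂, n, e₁, e₂, rfl, hn₁, hn₂⟩
  · exact Or.inl ⟨p, hp, pl, h1, h2⟩
  · right
    subst e₁; subst e₂
    obtain ⟨p₀, hp₀, hSdef⟩ := hS.1
    have hreach : Relation.ReflTransGen E p₁ p₂ := by
      have h₁' := hp₁; have h₂' := hp₂
      rw [hSdef] at h₁' h₂'
      exact h₁'.2.trans h₂'.1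
    have hch : Relation.ReflTransGen (StepRel F c i S r) n₁ n₂ :=
      chainT hE hSdef hp₂ ⟨pl₂, hl₂, ha₂⟩ hreach hp₁ n₁ ⟨pl₁, hl₁, ha₁⟩
    obtain ⟨z, z', hz, hz', hb1, hb2, hb3⟩ :=
      straddle (fun u v h => h) hch ⟨p₁, hp₁, pl₁, hl₁, ha₁⟩ n hn₁ hn₂
    exact ⟨r, n, z, z', rfl, hb1, hb2, hb3, hz, hz'⟩

lemma branchI (hE : ∀ p q, E p q ↔ PointsTo F c (i p) (i q))
    {S₁ S₂ : Set (Fin k)} (hS₁ : IsMinSCC E S₁) (hS₂ : IsMinSCC E S₂)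
    {b₁ : List ℕ} (hb₁ : b₁ ∈ extAnchorsOf F c i S₁)
    {q : Fin k} (hqS : q ∈ S₂) {aq : List ℕ} (haq : Anch F c (i q) aq)
    (hpre : b₁ <+: aq) : S₁ = S₂ := by
  rcases straddle_anchor hE hS₁ hb₁ with ⟨p, hpS, hap⟩ |
    ⟨r, n, z, z', rfl, hzn, hnz, hzc, ⟨p, hpS, hap⟩, -⟩
  · exact final_eq hE hS₁ hS₂ hqS hpS haq hap
      ⟨b₁, hpre, 0, Nat.zero_le c, Or.inl ⟨rfl, rfl⟩⟩
  · exact final_eq hE hS₁ hS₂ hqS hpS haq hap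
      ⟨r ++ [n], hpre, (n - z) + (z - n), by omega, Or.inr ⟨r, n, z, rfl, rfl, rfl⟩⟩

lemma key (hE : ∀ p q, E p q ↔ PointsTo F c (i p) (i q))
    {S₁ S₂ : Set (Fin k)} (hS₁ : IsMinSCC E S₁) (hS₂ : IsMinSCC E S₂)
    {b₁ b₂ : List ℕ} (hb₁ : b₁ ∈ extAnchorsOf F c i S₁)
    (hb₂ : b₂ ∈ extAnchorsOf F c i S₂) (hpre : b₁ <+: b₂) : S₁ = S₂ := by
  rcases straddle_anchor hE hS₂ hb₂ with ⟨q, hqS, haq⟩ |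
    ⟨r, n, z, z', rfl, hzn, hnz, hzc, ⟨q, hqS, haq⟩, ⟨q', hq'S, haq'⟩⟩
  · exact branchI hE hS₁ hS₂ hb₁ hqS haq hpre
  · by_cases heq : b₁ = r ++ [n]
    · -- overlap at the same node b = r ++ [n]
      subst heq
      -- get a straddle pair for S₁ at n as well
      have hstr₁ : ∃ z₁ z₁', z₁ ≤ n ∧ n ≤ z₁' ∧ z₁' ≤ z₁ + c ∧
          (∃ p ∈ S₁, Anch F c (i p) (r ++ [z₁])) ∧
          (∃ p ∈ S₁, Anch F c (i p) (r ++ [z₁'])) := by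
        rcases straddle_anchor hE hS₁ hb₁ with ⟨p, hpS, hap⟩ |
          ⟨r', n', z₁, z₁', he, h1, h2, h3, hw1, hw2⟩
        · exact ⟨n, n, le_refl n, le_refl n, by omega, ⟨p, hpS, hap⟩, ⟨p, hpS, hap⟩⟩
        · obtain ⟨rfl, hh⟩ := List.append_inj' he rfl
          have : n = n' := by simpa using hh
          subst this
          exact ⟨z₁, z₁', h1, h2, h3, hw1, hw2⟩
      obtain ⟨z₁, z₁', h1, h2, h3, ⟨p, hpS, hap⟩, ⟨p', hp'S, hap'⟩⟩ := hstr₁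
      rcases le_total z₁ z with hle | hle
      · -- edge from q (anchor r++[z], in S₂) to p' (anchor r++[z₁'], in S₁)
        exact final_eq hE hS₁ hS₂ hqS hp'S haq hap'
          ⟨r ++ [z], List.prefix_refl _, (z - z₁') + (z₁' - z), by omega,
            Or.inr ⟨r, z, z₁', rfl, rfl, rfl⟩⟩
      · -- edge from p (anchor r++[z₁], in S₁) to q' (anchor r++[z'], in S₂)
        exact (final_eq hE hS₂ hS₁ hpS hq'S hap haq'
          ⟨r ++ [z₁], List.prefix_refl _, (z₁ - z') + (z' - z₁), by omega,
            Or.inr ⟨r, z₁, z', rfl, rfl, rfl⟩⟩).symm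
    · -- strict prefix
      have hlen : b₁.length ≤ r.length := by
        rcases Nat.lt_or_ge b₁.length (r ++ [n]).length with h | h
        · have := h; simp only [List.length_append, List.length_singleton] at this
          omega
        · exact absurd (hpre.eq_of_length (le_antisymm hpre.length_le h)) heq
      have hpr : b₁ <+: r :=
        List.prefix_of_prefix_length_le hpre (List.prefix_append r [n]) hlen
      exact branchI hE hS₁ hS₂ hb₁ hqS haq
        (hpr.trans (List.prefix_append r [z]))

end Aux
theorem stmt6 {A M : Type} [Monoid M] [Fintype M] (μ : List A → M)
    (F : Forest A) (w : List A) (hw : F.word = w) (hne : w ≠ [])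
    (hF : IsForest μ (Fintype.card M) F)
    {k : ℕ} (i : Fin k → Fin w.length)
    (E : Fin k → Fin k → Prop)
    (hE : ∀ p q, E p q ↔ PointsTo F (Fintype.card M) (i p : ℕ) (i q : ℕ))
    (S₁ S₂ : Set (Fin k)) (h12 : S₁ ≠ S₂)
    (hS₁ : IsMinSCC E S₁) (hS₂ : IsMinSCC E S₂) :
    ∀ p ∈ F.leafPaths,
      ¬((∃ b₁ ∈ extAnchorsOf F (Fintype.card M) (fun q => (i q : ℕ)) S₁, b₁ <+: p) ∧
        (∃ b₂ ∈ extAnchorsOf F (Fintype.card M) (fun q => (i q : ℕ)) S₂, b₂ <+: p)) := by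
  intro p hp
  rintro ⟨⟨b₁, hb₁, hb₁p⟩, ⟨b₂, hb₂, hb₂p⟩⟩
  rcases List.prefix_or_prefix_of_prefix hb₁p hb₂p with h | h
  · exact h12 (key hE hS₁ hS₂ hb₁ hb₂ h)
  · exact h12 (key hE hS₂ hS₁ hb₂ hb₁ h).symm
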